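/- Let q ≥ 2 and let i ≠ j in Fin q. Set α_{ij} := a_{ii} + a_{jj} − a_{ij} − a_{ji} and β_{ij} := b_{ii} + b_{jj} − b_{ij} − b_{ji} in V. Then T α_{ij} = α_{ij} and T β_{ij} = α_{ij} + β_{ij}. In particular the 2-dimensional subspace spanned by α_{ij} and β_{ij} is T-invariant and the characteristic polynomial of the restriction of T to it is (X − 1)². -/

import Mathlib

/-- Index type for the basis `{h, r} ∪ {a_{ij}} ∪ {b_{ij}}` of `Pic(Z) ⊗ ℚ`. -/
abbrev PicIdx (q : ℕ) := Unit ⊕ Unit ⊕ (Fin q × Fin q) ⊕ (Fin q × Fin q)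

noncomputable section

/-- The standard basis of the free `ℚ`-vector space `V = PicIdx q → ℚ`. -/
def picBasis (q : ℕ) : Module.Basis (PicIdx q) ℚ (PicIdx q → ℚ) := Pi.basisFun ℚ (PicIdx q)

/-- The basis vector `h` (the class of a hyperplane `H`). -/
def vh (q : ℕ) : PicIdx q → ℚ := picBasis q (Sum.inl ())

/-- The basis vector `r` (the class of the exceptional divisor `R¹`). -/
def vr (q : ℕ) : PicIdx q → ℚ := picBasis q (Sum.inr (Sum.inl ()))

/-- The basis vector `a_{ij}` (the class of the exceptional divisor `A^{ij}`). -/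
def va (q : ℕ) (i j : Fin q) : PicIdx q → ℚ := picBasis q (Sum.inr (Sum.inr (Sum.inl (i, j))))

/-- The basis vector `b_{ij}` (the class of the exceptional divisor `B^{ij}`). -/
def vb (q : ℕ) (i j : Fin q) : PicIdx q → ℚ := picBasis q (Sum.inr (Sum.inr (Sum.inr (i, j))))

/-- `Σ_{k,ℓ} a_{kℓ}`. -/
def sa (q : ℕ) : PicIdx q → ℚ := ∑ p : Fin q × Fin q, va q p.1 p.2

/-- `Σ_{k,ℓ} b_{kℓ}`. -/
def sb (q : ℕ) : PicIdx q → ℚ := ∑ p : Fin q × Fin q, vb q p.1 p.2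

/-- The linear map `T = K*` on `Pic(Z) ⊗ ℚ` of Proposition 6.1, determined on the basis by
`T h = (q²−q+1)h − (q−2)r − (2q−3)Σa − (2q−2)Σb`,
`T r = (q²−q)h − (q−1)r − (2q−3)Σa − (2q−2)Σb`,
`T a_{ij} = h − b_{ji} − Σ_{(k,ℓ) : k=j ∨ ℓ=i}(a_{kℓ} + b_{kℓ})`, and
`T b_{ij} = a_{ji} + b_{ji}`. -/
def Tpic (q : ℕ) : (PicIdx q → ℚ) →ₗ[ℚ] (PicIdx q → ℚ) :=
  (picBasis q).constr ℚ fun idx =>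
    match idx with
    | Sum.inl _ =>
        ((q : ℚ) ^ 2 - q + 1) • vh q - ((q : ℚ) - 2) • vr q
          - (2 * (q : ℚ) - 3) • sa q - (2 * (q : ℚ) - 2) • sb q
    | Sum.inr (Sum.inl _) =>
        ((q : ℚ) ^ 2 - q) • vh q - ((q : ℚ) - 1) • vr q
          - (2 * (q : ℚ) - 3) • sa q - (2 * (q : ℚ) - 2) • sb q
    | Sum.inr (Sum.inr (Sum.inl (i, j))) =>
        vh q - vb q j i
          - ∑ p ∈ Finset.univ.filter (fun p : Fin q × Fin q => p.1 = j ∨ p.2 = i),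
              (va q p.1 p.2 + vb q p.1 p.2)
    | Sum.inr (Sum.inr (Sum.inr (i, j))) => va q j i + vb q j i

end

open Finset in
private theorem filtsum {q : ℕ} {M : Type*} [AddCommGroup M] (g : Fin q × Fin q → M)
    (i j : Fin q) :
    ∑ p ∈ univ.filter (fun p : Fin q × Fin q => p.1 = j ∨ p.2 = i), g p
      = (∑ l, g (j, l)) + (∑ k, g (k, i)) - g (j, i) := by
  have hu := Finset.sum_union_inter (s₁ := univ.filter (fun p : Fin q × Fin q => p.1 = j))
    (s₂ := univ.filter (fun p : Fin q × Fin q => p.2 = i)) (f := g)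
  rw [← Finset.filter_or, ← Finset.filter_and] at hu
  have h1 : univ.filter (fun p : Fin q × Fin q => p.1 = j ∧ p.2 = i) = {(j, i)} := by
    ext p; simp [Prod.ext_iff]
  have h2 : ∑ p ∈ univ.filter (fun p : Fin q × Fin q => p.1 = j), g p = ∑ l, g (j, l) := by
    rw [Finset.sum_filter, Fintype.sum_prod_type]
    have hx : ∀ x : Fin q, (∑ y : Fin q, if x = j then g (x, y) else 0)
        = if x = j then ∑ y : Fin q, g (x, y) else 0 := fun x => by split <;> simp
    simp [hx, Finset.sum_ite_eq']
  have h3 : ∑ p ∈ univ.filter (fun p : Fin q × Fin q => p.2 = i), g p = ∑ k, g (k, i) := by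
    rw [Finset.sum_filter, Fintype.sum_prod_type_right]
    have hx : ∀ x : Fin q, (∑ y : Fin q, if x = i then g (y, x) else 0)
        = if x = i then ∑ y : Fin q, g (y, x) else 0 := fun x => by split <;> simp
    simp [hx, Finset.sum_ite_eq']
  rw [h1, h2, h3, Finset.sum_singleton] at hu
  rw [eq_sub_iff_add_eq, hu]

private lemma Tpic_va (q : ℕ) (i j : Fin q) : Tpic q (va q i j) = vh q - vb q j i
    - ∑ p ∈ Finset.univ.filter (fun p : Fin q × Fin q => p.1 = j ∨ p.2 = i),
        (va q p.1 p.2 + vb q p.1 p.2) := by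
  rw [Tpic, va, Module.Basis.constr_basis]

private lemma Tpic_vb (q : ℕ) (i j : Fin q) : Tpic q (vb q i j) = va q j i + vb q j i := by
  rw [Tpic, vb, Module.Basis.constr_basis]

private lemma va_apply (q : ℕ) (k l : Fin q) (x : PicIdx q) :
    va q k l x = if x = Sum.inr (Sum.inr (Sum.inl (k, l))) then 1 else 0 := by
  rw [va, picBasis, Pi.basisFun_apply, Pi.single_apply]

private lemma vb_apply (q : ℕ) (k l : Fin q) (x : PicIdx q) :
    vb q k l x = if x = Sum.inr (Sum.inr (Sum.inr (k, l))) then 1 else 0 := by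
  rw [vb, picBasis, Pi.basisFun_apply, Pi.single_apply]

open Polynomial in
/-- For `i ≠ j`, with `α_{ij} = a_{ii}+a_{jj}−a_{ij}−a_{ji}` and
`β_{ij} = b_{ii}+b_{jj}−b_{ij}−b_{ji}`, one has `Tα = α` and `Tβ = α + β`; the plane spanned
by `α, β` is `T`-invariant and the characteristic polynomial of the restriction is `(X−1)²`. -/
theorem Tpic_invariant_Sij (q : ℕ) (hq : 2 ≤ q) (i j : Fin q) (hij : i ≠ j) :
    Tpic q (va q i i + va q j j - va q i j - va q j i) =
      va q i i + va q j j - va q i j - va q j i ∧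
    Tpic q (vb q i i + vb q j j - vb q i j - vb q j i) =
      (va q i i + va q j j - va q i j - va q j i) +
      (vb q i i + vb q j j - vb q i j - vb q j i) ∧
    ∃ hW : ∀ x ∈ Submodule.span ℚ
        {va q i i + va q j j - va q i j - va q j i,
         vb q i i + vb q j j - vb q i j - vb q j i},
        Tpic q x ∈ Submodule.span ℚ
        {va q i i + va q j j - va q i j - va q j i,
         vb q i i + vb q j j - vb q i j - vb q j i},
      ((Tpic q).restrict hW).charpoly = (X - 1) ^ 2 := by
  set α := va q i i + va q j j - va q i j - va q j i with hα
  set β := vb q i i + vb q j j - vb q i j - vb q j i with hβ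
  have hTα : Tpic q α = α := by
    rw [hα]
    simp only [map_sub, map_add, Tpic_va,
      filtsum (fun p : Fin q × Fin q => va q p.1 p.2 + vb q p.1 p.2)]
    abel
  have hTβ : Tpic q β = α + β := by
    rw [hβ, hα]
    simp only [map_sub, map_add, Tpic_vb]
    abel
  have hαmem : α ∈ Submodule.span ℚ {α, β} :=
    Submodule.subset_span (Set.mem_insert _ _)
  have hβmem : β ∈ Submodule.span ℚ {α, β} :=
    Submodule.subset_span (Set.mem_insert_iff.mpr (Or.inr rfl))
  have hW : ∀ x ∈ Submodule.span ℚ {α, β}, Tpic q x ∈ Submodule.span ℚ {α, β} := by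
    intro x hx
    induction hx using Submodule.span_induction with
    | mem x hx =>
      rcases hx with rfl | hx
      · rw [hTα]; exact hαmem
      · rw [Set.mem_singleton_iff.mp hx, hTβ]; exact add_mem hαmem hβmem
    | zero => simp
    | add x y _ _ hx hy => rw [map_add]; exact add_mem hx hy
    | smul c x _ hx => rw [map_smul]; exact Submodule.smul_mem _ c hx
  refine ⟨hTα, hTβ, hW, ?_⟩
  -- linear independence of α, β
  have li : LinearIndependent ℚ ![α, β] := by
    rw [LinearIndependent.pair_iff]
    intro s t hst
    have h0 := congrFun hst (Sum.inr (Sum.inr (Sum.inl (i, i))))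
    have h1 := congrFun hst (Sum.inr (Sum.inr (Sum.inr (i, i))))
    simp [hα, hβ, va_apply, vb_apply, hij, hij.symm] at h0 h1
    exact ⟨h0, h1⟩
  have hrange : Set.range ![α, β] = {α, β} := by
    ext x
    constructor
    · rintro ⟨k, rfl⟩; fin_cases k <;> simp
    · rintro (rfl | rfl)
      exacts [⟨0, rfl⟩, ⟨1, rfl⟩]
  let e : Submodule.span ℚ (Set.range ![α, β]) ≃ₗ[ℚ] Submodule.span ℚ {α, β} :=
    LinearEquiv.ofEq _ _ (by rw [hrange])
  let b : Module.Basis (Fin 2) ℚ (Submodule.span ℚ {α, β}) := (Module.Basis.span li).map e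
  have hb0 : ((b 0 : Submodule.span ℚ {α, β}) : PicIdx q → ℚ) = α := by
    simp only [b, Module.Basis.map_apply, e, LinearEquiv.coe_ofEq_apply, Module.Basis.span_apply]
    rfl
  have hb1 : ((b 1 : Submodule.span ℚ {α, β}) : PicIdx q → ℚ) = β := by
    simp only [b, Module.Basis.map_apply, e, LinearEquiv.coe_ofEq_apply, Module.Basis.span_apply]
    rfl
  set f := (Tpic q).restrict hW with hf
  have hf0 : f (b 0) = b 0 := by
    apply Subtype.ext
    rw [hf, LinearMap.restrict_apply]
    simp [hb0, hTα]
  have hf1 : f (b 1) = b 0 + b 1 := by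
    apply Subtype.ext
    rw [hf, LinearMap.restrict_apply]
    simp [hb0, hb1, hTβ]
  have hM : LinearMap.toMatrix b b f = !![1, 1; 0, 1] := by
    ext k l
    fin_cases k <;> fin_cases l <;>
      simp [LinearMap.toMatrix_apply, hf0, hf1, Module.Basis.repr_self, Finsupp.single_apply]
  rw [← LinearMap.charpoly_toMatrix f b, hM, Matrix.charpoly, Matrix.det_fin_two]
  simp [Matrix.charmatrix_apply]
  ring
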